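/- arXiv:1010.2030 — 2 statements merged into one kernel-verified Lean document; each statement's English description precedes it below -/
import Mathlib

section
/- For all integers q ≥ 2 and d ≥ 3, the function ζ_{q,d} is continuously differentiable on the closed interval [−1/(q−1), 1], and its derivative is strictly positive at every point of the open interval (−1/(q−1), 1). -/
open Real Set Filter Polynomial
open scoped Classical

/-- The function `ζ_{q,d}`, extended by continuity at `ẑ = -1` when `q = 2` and `d` is odd. -/
noncomputable def zetaF (q d : ℕ) (z : ℝ) : ℝ :=
  if q = 2 ∧ Odd d ∧ z = -1 then 2 / (d : ℝ) - 1
  else (z + z ^ (d - 1) + ((q : ℝ) - 2) * z ^ d) / (1 + ((q : ℝ) - 1) * z ^ d)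

/-!
Away from `z = -1`, `ζ_{q,d} = N / D` with `N = z + z^(d-1) + (q-2) z^d` and `D = 1 + (q-1) z^d`.
On `[-1/(q-1), 1]` the denominator `D` vanishes only when `q = 2`, `d` is odd and `z = -1`; there
one cancels the common factor `1 + z` and writes `ζ_{2,d}(z) = z ∑_{i<d-2} (-z)^i / ∑_{i<d} (-z)^i`,
whose denominator is a geometric sum of odd length, hence positive. Either way `ζ_{q,d}` agrees on
the interval with a quotient of smooth functions with nonvanishing denominator, so it is `C¹` there.

On the open interval the derivative is `(N'D - ND') / D²`. Writing `d = k + 3` and `z = -y` for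
negative `z`, the numerator `N'D - ND'` regroups into nonnegative terms plus one positive term,
and the only inequality that is not termwise is AM-GM for a geometric sum,
`(n + 1) x^n ≤ ∑_{i ≤ n} x^(2i)`.
-/

open Finset

lemma two_mul_pow_le_sq_pow_add_sq_pow (x : ℝ) {i n : ℕ} (hi : i ≤ n) :
    2 * x ^ n ≤ (x ^ 2) ^ i + (x ^ 2) ^ (n - i) := by
  have hsplit : x ^ n = x ^ i * x ^ (n - i) := by rw [← pow_add, Nat.add_sub_cancel' hi]
  rw [hsplit, ← pow_mul, ← pow_mul, mul_comm 2 i, mul_comm 2 (n - i), pow_mul, pow_mul]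
  nlinarith [sq_nonneg (x ^ i - x ^ (n - i))]

lemma sum_sq_pow_add_sq_pow_reflect (x : ℝ) (n : ℕ) :
    ∑ i ∈ range (n + 1), ((x ^ 2) ^ i + (x ^ 2) ^ (n - i)) =
      2 * ∑ i ∈ range (n + 1), (x ^ 2) ^ i := by
  rw [sum_add_distrib, ← sum_range_reflect (fun i => (x ^ 2) ^ i) (n + 1)]
  simp only [Nat.add_sub_cancel]
  ring

/-- AM-GM for the terms of `∑ i ≤ n, x ^ (2 * i)`, whose geometric mean is `x ^ n`. -/
lemma succ_mul_pow_le_geom_sum_sq (x : ℝ) (n : ℕ) :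
    (n + 1) * x ^ n ≤ ∑ i ∈ range (n + 1), (x ^ 2) ^ i := by
  have h := sum_le_sum (s := range (n + 1)) fun i hi =>
    two_mul_pow_le_sq_pow_add_sq_pow x (n := n) (Nat.lt_succ_iff.mp (mem_range.mp hi))
  rw [sum_sq_pow_add_sq_pow_reflect, sum_const, card_range, nsmul_eq_mul] at h
  push_cast at h
  linarith

lemma succ_mul_pow_lt_geom_sum_sq {x : ℝ} {n : ℕ} (hx : x ^ n ≠ 1) :
    (n + 1) * x ^ n < ∑ i ∈ range (n + 1), (x ^ 2) ^ i := by
  have hlt : 2 * x ^ n < (x ^ 2) ^ 0 + (x ^ 2) ^ (n - 0) := by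
    rw [pow_zero, Nat.sub_zero, ← pow_mul, mul_comm 2 n, pow_mul]
    nlinarith [sq_pos_of_ne_zero (sub_ne_zero.mpr hx)]
  have h := sum_lt_sum (s := range (n + 1)) (fun i hi =>
      two_mul_pow_le_sq_pow_add_sq_pow x (n := n) (Nat.lt_succ_iff.mp (mem_range.mp hi)))
    ⟨0, mem_range.mpr n.succ_pos, hlt⟩
  rw [sum_sq_pow_add_sq_pow_reflect, sum_const, card_range, nsmul_eq_mul] at h
  push_cast at h
  linarith

lemma odd_mul_one_sub_mul_pow_le_one_sub_pow {u : ℝ} (hu0 : 0 ≤ u) (hu1 : u ≤ 1) (n : ℕ) :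
    (2 * n + 1) * (1 - u) * u ^ n ≤ 1 - u ^ (2 * n + 1) := by
  have hamgm := succ_mul_pow_le_geom_sum_sq (√u) (2 * n)
  rw [sq_sqrt hu0, pow_mul, sq_sqrt hu0] at hamgm
  push_cast at hamgm
  rw [← mul_neg_geom_sum]
  nlinarith [mul_le_mul_of_nonneg_left hamgm (sub_nonneg.mpr hu1)]

/-- The numerator `N'D - ND'` of the derivative of `ζ_{e,k+3} = N / D`. -/
def zetaDerivNum (e : ℝ) (k : ℕ) (z : ℝ) : ℝ :=
  1 + (k + 2) * z ^ (k + 1) + (k + 3) * (e - 2) * z ^ (k + 2)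
    - (k + 2) * (e - 1) * z ^ (k + 3) - (e - 1) * z ^ (2 * k + 4)

lemma zetaDerivNum_pos_of_nonneg {e z : ℝ} (he : 2 ≤ e) (k : ℕ) (hz0 : 0 ≤ z) (hz1 : z < 1) :
    0 < zetaDerivNum e k z := by
  have hsq : z ^ 2 ≤ 1 := pow_le_one₀ hz0 hz1.le
  have hpow : z ^ (k + 2) ≤ 1 := pow_le_one₀ hz0 hz1.le
  have h1 : 0 < 1 - z ^ (2 * k + 4) := sub_pos.mpr (pow_lt_one₀ hz0 hz1 (by omega))
  have h2 : 0 ≤ (k + 2) * z ^ (k + 1) * (1 - z ^ 2) := by positivity [sub_nonneg.mpr hsq]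
  have h3 : 0 ≤ (e - 2) * z ^ (k + 2) * ((k + 3) - (k + 2) * z - z ^ (k + 2)) := by
    refine mul_nonneg (by positivity [sub_nonneg.mpr he]) ?_
    nlinarith
  have : zetaDerivNum e k z = (1 - z ^ (2 * k + 4)) + (k + 2) * z ^ (k + 1) * (1 - z ^ 2)
      + (e - 2) * z ^ (k + 2) * ((k + 3) - (k + 2) * z - z ^ (k + 2)) := by
    unfold zetaDerivNum; ring
  linarith

lemma zetaDerivNum_neg (e : ℝ) (k : ℕ) (y : ℝ) :
    zetaDerivNum e k (-y) = 1 - (-1) ^ k * ((k + 2) * y ^ (k + 1)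
      - (k + 3) * (e - 2) * y ^ (k + 2) - (k + 2) * (e - 1) * y ^ (k + 3))
      - (e - 1) * y ^ (2 * k + 4) := by
  rw [zetaDerivNum, show 2 * k + 4 = 2 * (k + 2) by ring, pow_mul (-y), neg_sq, ← pow_mul]
  simp only [neg_pow y, pow_succ (-1 : ℝ)]
  ring

lemma zetaDerivNum_neg_pos_of_even {e y : ℝ} (he : 2 ≤ e) {k : ℕ} (hk : Even k) (hy0 : 0 ≤ y)
    (hy1 : y < 1) : 0 < zetaDerivNum e k (-y) := by
  have hamgm := succ_mul_pow_lt_geom_sum_sq (pow_lt_one₀ hy0 hy1 (n := k + 1) (by omega)).ne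
  have hgeom := mul_neg_geom_sum (y ^ 2) (k + 1 + 1)
  have h1 : 0 < (1 - y ^ 2) * (∑ i ∈ range (k + 1 + 1), (y ^ 2) ^ i - (k + 2) * y ^ (k + 1)) :=
    mul_pos (by nlinarith) (by push_cast at hamgm; linarith)
  have h2 : 0 ≤ (e - 2) * y ^ (k + 3) * ((k + 2) - y ^ (k + 1)) := by
    refine mul_nonneg (by positivity [sub_nonneg.mpr he]) ?_
    linarith [pow_le_one₀ (n := k + 1) hy0 hy1.le]
  have h3 : 0 ≤ (k + 3) * (e - 2) * y ^ (k + 2) := by positivity [sub_nonneg.mpr he]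
  rw [zetaDerivNum_neg, hk.neg_one_pow]
  linear_combination h1 + h2 + h3 + hgeom

lemma zetaDerivNum_neg_pos_of_odd {e y : ℝ} (he : 2 ≤ e) {k : ℕ} (hk : Odd k) (hy0 : 0 ≤ y)
    (hy : y < 1 / (e - 1)) : 0 < zetaDerivNum e k (-y) := by
  have he1 : 0 < e - 1 := by linarith
  generalize hu : 1 / (e - 1) = u at hy
  have hu0 : 0 < u := hu ▸ by positivity
  have heu : (e - 1) * u = 1 := by rw [← hu]; field_simp
  have hu1 : u ≤ 1 := by nlinarith
  have hey : (e - 1) * y ≤ 1 := by nlinarith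
  have hbound := odd_mul_one_sub_mul_pow_le_one_sub_pow hu0.le hu1 (k + 1)
  have h1 : 0 ≤ (k + 2) * y ^ (k + 1) * (1 - (e - 1) * y ^ 2) := by
    refine mul_nonneg (by positivity) ?_
    nlinarith
  have h2 : (k + 3) * (e - 2) * y ^ (k + 2) ≤ (k + 3) * (e - 2) * u ^ (k + 2) := by gcongr
  have h3 : (e - 1) * y ^ (2 * k + 4) < (e - 1) * u ^ (2 * k + 4) := by gcongr
  have h4 : (k + 3) * (1 - u) * u ^ (k + 1) ≤ (2 * (k + 1) + 1) * (1 - u) * u ^ (k + 1) := by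
    refine mul_le_mul_of_nonneg_right (mul_le_mul_of_nonneg_right ?_ (by linarith))
      (pow_nonneg hu0.le _)
    linarith [k.cast_nonneg (α := ℝ)]
  rw [zetaDerivNum_neg, hk.neg_one_pow]
  push_cast at hbound
  linear_combination
    h1 + h2 + h3 + h4 + hbound + ((k + 3) * u ^ (k + 1) + u ^ (2 * k + 3)) * heu

lemma zetaDerivNum_pos {e z : ℝ} (he : 2 ≤ e) (k : ℕ) (hz : z ∈ Ioo (-(1 / (e - 1))) 1) :
    0 < zetaDerivNum e k z := by
  obtain ⟨hz1, hz2⟩ := hz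
  rcases le_or_gt 0 z with hz0 | hz0
  · exact zetaDerivNum_pos_of_nonneg he k hz0 hz2
  have hy : -z < 1 / (e - 1) := by linarith
  rw [← neg_neg z]
  rcases k.even_or_odd with hk | hk
  · have hu1 : 1 / (e - 1) ≤ 1 := by rw [div_le_one₀ (by linarith)]; linarith
    exact zetaDerivNum_neg_pos_of_even he hk (by linarith) (hy.trans_le hu1)
  · exact zetaDerivNum_neg_pos_of_odd he hk (by linarith) hy

lemma exists_continuousOn_hasDerivWithinAt_of_eqOn_div {f P Q : ℝ → ℝ} {s : Set ℝ}
    (hP : ContDiff ℝ 1 P) (hQ : ContDiff ℝ 1 Q) (hQs : ∀ x ∈ s, Q x ≠ 0)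
    (hf : EqOn f (fun x => P x / Q x) s) :
    ∃ f' : ℝ → ℝ, ContinuousOn f' s ∧ ∀ x ∈ s, HasDerivWithinAt f (f' x) s x := by
  have hU : IsOpen {x | Q x ≠ 0} := isOpen_ne_fun hQ.continuous continuous_const
  have hPQ : ContDiffOn ℝ 1 (fun x => P x / Q x) {x | Q x ≠ 0} :=
    hP.contDiffOn.div hQ.contDiffOn fun _ hx => hx
  refine ⟨deriv fun x => P x / Q x, (hPQ.continuousOn_deriv_of_isOpen hU le_rfl).mono hQs, ?_⟩
  intro x hx
  have hdiff := (hPQ.differentiableOn one_ne_zero x (hQs x hx)).differentiableAt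
    (hU.mem_nhds (hQs x hx))
  exact hdiff.hasDerivAt.hasDerivWithinAt.congr hf (hf hx)

lemma one_add_mul_pow_pos {e z : ℝ} {d : ℕ} (he : 1 < e) (hd : 2 ≤ d) (hz : -(1 / (e - 1)) ≤ z)
    (hz1 : -1 < z) : 0 < 1 + (e - 1) * z ^ d := by
  have he1 : 0 < e - 1 := by linarith
  rcases le_or_gt 0 z with hz0 | hz0
  · positivity
  have hez : (e - 1) * |z| ≤ 1 := by
    rw [abs_of_neg hz0, ← le_div_iff₀' he1]
    linarith
  have hpow : |z| ^ (d - 1) < 1 :=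
    pow_lt_one₀ (abs_nonneg z) (by rw [abs_of_neg hz0]; linarith) (by omega)
  have hzd : (e - 1) * |z ^ d| < 1 :=
    calc (e - 1) * |z ^ d| = (e - 1) * |z| * |z| ^ (d - 1) := by
          rw [abs_pow, mul_assoc, ← pow_succ', Nat.sub_add_cancel (by omega : 1 ≤ d)]
      _ ≤ |z| ^ (d - 1) := mul_le_of_le_one_left (by positivity) hez
      _ < 1 := hpow
  linarith [mul_le_mul_of_nonneg_left (neg_abs_le (z ^ d)) he1.le]

lemma neg_one_lt_of_mem_Ioo {e z : ℝ} (he : 2 ≤ e) (hz : z ∈ Ioo (-(1 / (e - 1))) 1) : -1 < z :=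
  lt_of_le_of_lt (by rw [neg_le_neg_iff, div_le_one₀ (by linarith)]; linarith) hz.1

lemma one_add_mul_pow_pos_of_mem_Ioo {e z : ℝ} {d : ℕ} (he : 2 ≤ e) (hd : 2 ≤ d)
    (hz : z ∈ Ioo (-(1 / (e - 1))) 1) : 0 < 1 + (e - 1) * z ^ d :=
  one_add_mul_pow_pos (by linarith) hd hz.1.le (neg_one_lt_of_mem_Ioo he hz)

lemma one_add_mul_pow_pos_of_not_exceptional {q d : ℕ} (hq : 2 ≤ q) (hd : 2 ≤ d)
    (hex : ¬(q = 2 ∧ Odd d)) {z : ℝ} (hz : -(1 / ((q : ℝ) - 1)) ≤ z) :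
    0 < 1 + ((q : ℝ) - 1) * z ^ d := by
  rcases hq.eq_or_lt with rfl | hq3
  · have hd : Even d := Nat.not_odd_iff_even.mp fun h => hex ⟨rfl, h⟩
    have := hd.pow_nonneg z
    norm_num
    positivity
  · have hq3' : (3 : ℝ) ≤ q := by exact_mod_cast hq3
    refine one_add_mul_pow_pos (by linarith) hd hz (lt_of_lt_of_le ?_ hz)
    rw [neg_lt_neg_iff, div_lt_one (by linarith)]
    linarith

lemma one_add_mul_geom_sum_neg {n : ℕ} (hn : Odd n) (z : ℝ) :
    (1 + z) * ∑ i ∈ range n, (-z) ^ i = 1 + z ^ n := by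
  rw [← sub_neg_eq_add 1 z, mul_neg_geom_sum, hn.neg_pow, sub_neg_eq_add]

lemma zetaF_two_eq_div_geom_sum {k : ℕ} (hk : Even k) (z : ℝ) :
    zetaF 2 (k + 3) z = z * (∑ i ∈ range (k + 1), (-z) ^ i) / ∑ i ∈ range (k + 3), (-z) ^ i := by
  have hodd1 : Odd (k + 1) := hk.add_one
  have hodd3 : Odd (k + 3) := by simpa [add_assoc] using hk.add_odd (by decide : Odd 3)
  by_cases hz : z = -1
  · subst hz
    rw [zetaF, if_pos ⟨rfl, hodd3, rfl⟩]
    simp only [neg_neg, one_pow, sum_const, card_range, nsmul_eq_mul, mul_one]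
    field_simp
    push_cast
    ring
  have hz1 : 1 + z ≠ 0 := fun h => hz (by linarith)
  have hS := (hodd3.geom_sum_pos (x := -z)).ne'
  have hD : (1 : ℝ) + ((2 : ℕ) - 1) * z ^ (k + 3) ≠ 0 := by
    rw [Nat.cast_ofNat, show (2 : ℝ) - 1 = 1 by norm_num, one_mul,
      ← one_add_mul_geom_sum_neg hodd3]
    exact mul_ne_zero hz1 hS
  rw [zetaF, if_neg (by tauto), show k + 3 - 1 = k + 2 from rfl, div_eq_div_iff hD hS]
  apply mul_left_cancel₀ hz1
  linear_combination (z + z ^ (k + 2)) * one_add_mul_geom_sum_neg hodd3 z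
    - z * (1 + z ^ (k + 3)) * one_add_mul_geom_sum_neg hodd1 z

lemma hasDerivAt_zeta_rational (e : ℝ) (k : ℕ) {z : ℝ} (hD : 1 + (e - 1) * z ^ (k + 3) ≠ 0) :
    HasDerivAt (fun w => (w + w ^ (k + 2) + (e - 2) * w ^ (k + 3)) / (1 + (e - 1) * w ^ (k + 3)))
      (zetaDerivNum e k z / (1 + (e - 1) * z ^ (k + 3)) ^ 2) z := by
  have hN := ((hasDerivAt_id z).add (hasDerivAt_pow (k + 2) z)).add
    ((hasDerivAt_pow (k + 3) z).const_mul (e - 2))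
  have hD' := ((hasDerivAt_pow (k + 3) z).const_mul (e - 1)).const_add 1
  refine (hN.div hD' hD).congr_deriv ?_
  simp only [zetaDerivNum, id, Pi.add_apply]
  push_cast
  ring

lemma hasDerivAt_zetaF {q : ℕ} (hq : 2 ≤ q) (k : ℕ) {z : ℝ}
    (hz : z ∈ Ioo (-(1 / ((q : ℝ) - 1))) 1) :
    HasDerivAt (zetaF q (k + 3))
      (zetaDerivNum q k z / (1 + ((q : ℝ) - 1) * z ^ (k + 3)) ^ 2) z := by
  have hq' : (2 : ℝ) ≤ q := by exact_mod_cast hq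
  have hD := one_add_mul_pow_pos_of_mem_Ioo (d := k + 3) hq' (by omega) hz
  refine (hasDerivAt_zeta_rational q k hD.ne').congr_of_eventuallyEq ?_
  filter_upwards [eventually_ne_nhds (neg_one_lt_of_mem_Ioo hq' hz).ne'] with w hw
  rw [zetaF, if_neg (by tauto)]
  rfl

lemma exists_contDiff_eqOn_zetaF_div {q : ℕ} (hq : 2 ≤ q) (k : ℕ) :
    ∃ P Q : ℝ → ℝ, ContDiff ℝ 1 P ∧ ContDiff ℝ 1 Q ∧
      (∀ z ∈ Icc (-(1 / ((q : ℝ) - 1))) 1, Q z ≠ 0) ∧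
      EqOn (zetaF q (k + 3)) (fun z => P z / Q z) (Icc (-(1 / ((q : ℝ) - 1))) 1) := by
  by_cases hex : q = 2 ∧ Odd (k + 3)
  · obtain ⟨rfl, hodd⟩ := hex
    have hk : Even k := by obtain ⟨j, hj⟩ := hodd; exact ⟨j - 1, by omega⟩
    exact ⟨_, _, by fun_prop, by fun_prop, fun z _ => (hodd.geom_sum_pos (x := -z)).ne',
      fun z _ => zetaF_two_eq_div_geom_sum hk z⟩
  · refine ⟨fun z => z + z ^ (k + 2) + ((q : ℝ) - 2) * z ^ (k + 3),
      fun z => 1 + ((q : ℝ) - 1) * z ^ (k + 3), by fun_prop, by fun_prop, fun z hz => ?_,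
      fun z _ => by rw [zetaF, if_neg (by tauto)]; rfl⟩
    exact (one_add_mul_pow_pos_of_not_exceptional hq (by omega) hex hz.1).ne'

/-- For `q ≥ 2` and `d ≥ 3`, `ζ_{q,d}` is continuously differentiable on
`[−1/(q−1), 1]` and its derivative is strictly positive on `(−1/(q−1), 1)`. -/
theorem zetaF_contDiff_and_deriv_pos (q d : ℕ) (hq : 2 ≤ q) (hd : 3 ≤ d) :
    ∃ f' : ℝ → ℝ,
      ContinuousOn f' (Set.Icc (-(1 / ((q : ℝ) - 1))) 1) ∧
      (∀ z ∈ Set.Icc (-(1 / ((q : ℝ) - 1))) 1,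
        HasDerivWithinAt (zetaF q d) (f' z) (Set.Icc (-(1 / ((q : ℝ) - 1))) 1) z) ∧
      (∀ z ∈ Set.Ioo (-(1 / ((q : ℝ) - 1))) 1, 0 < f' z) := by
  obtain ⟨k, rfl⟩ : ∃ k, d = k + 3 := ⟨d - 3, by omega⟩
  have hq' : (2 : ℝ) ≤ q := by exact_mod_cast hq
  obtain ⟨P, Q, hP, hQ, hQs, hPQ⟩ := exists_contDiff_eqOn_zetaF_div hq k
  obtain ⟨f', hf'c, hf'⟩ := exists_continuousOn_hasDerivWithinAt_of_eqOn_div hP hQ hQs hPQ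
  refine ⟨f', hf'c, hf', fun z hz => ?_⟩
  have hz' := (hf' z (Ioo_subset_Icc_self hz)).hasDerivAt (Icc_mem_nhds hz.1 hz.2)
  rw [hz'.unique (hasDerivAt_zetaF hq k hz)]
  exact div_pos (zetaDerivNum_pos hq' k hz)
    (pow_pos (one_add_mul_pow_pos_of_mem_Ioo hq' (by omega) hz) 2)
end

section
/- Let q ≥ 2, c ≥ 1, and d ≥ 3 be integers. Then: (i) ω_{q,c,d}(0) = 0; (ii) ω_{q,c,d}(1 − 1/q) = (1 − c/d)·ln q; (iii) if q ≥ 3 or d is even, ω_{q,c,d}(1) = ln(q−1) + (c/d)·ρ_{q,d}(1) − (c/d)·ln q; (iv) if q = 2 and d is odd, then ω_{2,c,d}(1 − 1/d) = (1 − c)·H₂(1/d) + (c/d)·ln d, and ω_{2,c,d}(x) = −∞ for every x ∈ (1 − 1/d, 1). -/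
open Real Set Filter Polynomial
open scoped Classical

/-- The entropy function `H_q`. -/
noncomputable def Hent (q : ℕ) (x : ℝ) : ℝ :=
  x * Real.log (1 / x) + (1 - x) * Real.log (1 / (1 - x)) + x * Real.log ((q : ℝ) - 1)

/-- The information divergence function `D(x‖y)`. -/
noncomputable def Dkl (x y : ℝ) : ℝ :=
  x * Real.log (x / y) + (1 - x) * Real.log ((1 - x) / (1 - y))

/-- The function `ρ_{q,d}`. -/
noncomputable def rhoF (q d : ℕ) (x : ℝ) : ℝ :=
  Real.log (1 + ((q : ℝ) - 1) * (1 - (q : ℝ) * x / ((q : ℝ) - 1)) ^ d)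

/-- The function `δ_{q,d}(x, x̂)`. -/
noncomputable def deltaTwo (q d : ℕ) (x xh : ℝ) : ℝ :=
  (d : ℝ) * Dkl x xh + rhoF q d xh

/-- The function `δ_{q,d}(x) = inf_{x̂ ∈ (0,1)} δ_{q,d}(x, x̂)`. -/
noncomputable def deltaMin (q d : ℕ) (x : ℝ) : ℝ :=
  sInf ((fun xh => deltaTwo q d x xh) '' Set.Ioo 0 1)

/-- The asymptotic growth rate `ω_{q,c,d}`. -/
noncomputable def omegaF (q c d : ℕ) (x : ℝ) : ℝ :=
  Hent q x + ((c : ℝ) / (d : ℝ)) * (deltaMin q d x - Real.log (q : ℝ))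

open Finset Topology

/-!
Everything rests on the binomial expansion
`exp ρ_{q,d}(p) = ∑ₖ wₖ (p / (q - 1))ᵏ (1 - p)ᵈ⁻ᵏ` with nonnegative weights
`wₖ = C(d,k) ((q - 1)ᵏ + (q - 1)(-1)ᵏ)`.
A single term of it bounds `δ_{q,d}(x, ·)` from below by its limit at an endpoint of `(0,1)`:
the term `k = 0` for `x = 0`, `k = d` for `x = 1`, and `k = d - 1` for `q = 2`, `x = 1 - 1/d`.
At `x = 1 - 1/q` weighted AM–GM over all terms gives `δ_{q,d}(x, ·) ≥ 0`, with equality at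
`x̂ = x`. For `q = 2` and odd `d`, `exp ρ_{2,d}` has a simple zero at `1`, so
`δ_{2,d}(x, x̂) = (1 - d (1 - x)) log (1 - x̂) + O(1)` as `x̂ → 1`, which tends to `-∞` when
`x > 1 - 1/d`.
-/

lemma csInf_image_eq_of_forall_le_of_tendsto {α : Type*} {s : Set α} {f : α → ℝ} {L : ℝ}
    {l : Filter α} [l.NeBot] (hle : ∀ p ∈ s, L ≤ f p) (hs : ∀ᶠ p in l, p ∈ s)
    (hf : Tendsto f l (𝓝 L)) : sInf (f '' s) = L := by
  have hbdd : BddBelow (f '' s) := ⟨L, forall_mem_image.2 hle⟩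
  obtain ⟨p, hp⟩ := hs.exists
  exact le_antisymm
    (ge_of_tendsto hf (hs.mono fun p hp => csInf_le hbdd (mem_image_of_mem f hp)))
    (le_csInf ⟨f p, mem_image_of_mem f hp⟩ (forall_mem_image.2 hle))

lemma sum_range_mul_choose_mul_pow (n : ℕ) (z : ℝ) :
    ∑ k ∈ range (n + 1), (k : ℝ) * n.choose k * z ^ k = n * z * (z + 1) ^ (n - 1) := by
  cases n with
  | zero => simp
  | succ m =>
    have hterm (j : ℕ) : ((j + 1 : ℕ) : ℝ) * (m + 1).choose (j + 1) * z ^ (j + 1)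
        = (m + 1) * z * (z ^ j * 1 ^ (m - j) * m.choose j) := by
      have := congrArg (Nat.cast : ℕ → ℝ) (Nat.add_one_mul_choose_eq m j)
      push_cast at this ⊢
      linear_combination -z ^ (j + 1) * this
    rw [sum_range_succ', sum_congr rfl fun j _ => hterm j, ← mul_sum, ← add_pow]
    push_cast
    ring

/-- Weighted AM–GM (concavity of `log`) for the weights `wₖ / W`, whose mean exponent is `m`. -/
lemma le_log_sum_mul_pow_mul_pow (d : ℕ) {w : ℕ → ℝ} (hw : ∀ k, 0 ≤ w k) {W m : ℝ}
    (hW : ∑ k ∈ range (d + 1), w k = W) (hWpos : 0 < W)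
    (hm : ∑ k ∈ range (d + 1), k * w k = m * W) {u v : ℝ} (hu : 0 < u) (hv : 0 < v) :
    log W + m * log u + (d - m) * log v
      ≤ log (∑ k ∈ range (d + 1), w k * u ^ k * v ^ (d - k)) := by
  have jensen := strictConcaveOn_log_Ioi.concaveOn.le_map_sum (t := range (d + 1))
    (w := fun k => w k / W) (p := fun k => W * (u ^ k * v ^ (d - k)))
    (fun k _ => div_nonneg (hw k) hWpos.le) (by rw [← sum_div, hW, div_self hWpos.ne'])
    (fun k _ => by simp only [Set.mem_Ioi]; positivity)
  have hlog (k : ℕ) (hk : k ∈ range (d + 1)) : w k / W * log (W * (u ^ k * v ^ (d - k)))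
      = w k / W * (log W + d * log v) + k * w k / W * (log u - log v) := by
    rw [log_mul hWpos.ne' (by positivity), log_mul (by positivity) (by positivity), log_pow,
      log_pow, Nat.cast_sub (mem_range_succ_iff.mp hk)]
    ring
  have hsum : ∑ k ∈ range (d + 1), w k / W * (W * (u ^ k * v ^ (d - k)))
      = ∑ k ∈ range (d + 1), w k * u ^ k * v ^ (d - k) :=
    sum_congr rfl fun k _ => by field_simp
  simp only [smul_eq_mul, sum_congr rfl hlog, sum_add_distrib, ← sum_mul, ← sum_div, hW, hm,
    div_self hWpos.ne', mul_div_cancel_right₀ _ hWpos.ne', hsum] at jensen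
  linarith

noncomputable def rhoWeight (a : ℝ) (d k : ℕ) : ℝ := d.choose k * (a ^ k + a * (-1) ^ k)

lemma sum_rhoWeight_mul_pow_mul_pow (a u v : ℝ) (d : ℕ) :
    ∑ k ∈ range (d + 1), rhoWeight a d k * u ^ k * v ^ (d - k)
      = (a * u + v) ^ d + a * (v - u) ^ d := by
  rw [add_pow, sub_eq_neg_add, add_pow, mul_sum, ← sum_add_distrib]
  exact sum_congr rfl fun k _ => by rw [rhoWeight, mul_pow, neg_pow]; ring

lemma rhoWeight_nonneg {a : ℝ} (ha : 1 ≤ a) (d k : ℕ) : 0 ≤ rhoWeight a d k := by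
  refine mul_nonneg (Nat.cast_nonneg _) ?_
  rcases Nat.even_or_odd k with hk | hk
  · rw [hk.neg_one_pow]; positivity
  · rcases k.eq_zero_or_pos with rfl | hk0
    · simp at hk
    rw [hk.neg_one_pow]
    nlinarith [le_self_pow₀ ha hk0.ne']

lemma sum_rhoWeight {d : ℕ} (hd : d ≠ 0) (a : ℝ) :
    ∑ k ∈ range (d + 1), rhoWeight a d k = (a + 1) ^ d := by
  simpa [zero_pow hd] using sum_rhoWeight_mul_pow_mul_pow a 1 1 d

lemma sum_mul_rhoWeight {d : ℕ} (hd : 2 ≤ d) (a : ℝ) :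
    ∑ k ∈ range (d + 1), k * rhoWeight a d k = d * a * (a + 1) ^ (d - 1) := by
  have hsplit (k : ℕ) : k * rhoWeight a d k
      = k * d.choose k * a ^ k + a * (k * d.choose k * (-1) ^ k) := by
    rw [rhoWeight]; ring
  rw [sum_congr rfl fun k _ => hsplit k, sum_add_distrib, ← mul_sum,
    sum_range_mul_choose_mul_pow, sum_range_mul_choose_mul_pow, neg_add_cancel,
    zero_pow (by omega)]
  ring

noncomputable def rhoArg (q d : ℕ) (x : ℝ) : ℝ :=
  1 + ((q : ℝ) - 1) * (1 - (q : ℝ) * x / ((q : ℝ) - 1)) ^ d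

lemma rhoF_eq_log_rhoArg (q d : ℕ) (x : ℝ) : rhoF q d x = log (rhoArg q d x) := rfl

lemma one_le_natCast_sub_one {q : ℕ} (hq : 2 ≤ q) : (1 : ℝ) ≤ q - 1 := by
  have : (2 : ℝ) ≤ q := by exact_mod_cast hq
  linarith

lemma rhoArg_eq_sum {q : ℕ} (hq : 2 ≤ q) (d : ℕ) (p : ℝ) : rhoArg q d p
    = ∑ k ∈ range (d + 1), rhoWeight (q - 1) d k * (p / (q - 1)) ^ k * (1 - p) ^ (d - k) := by
  have ha : (q : ℝ) - 1 ≠ 0 := by linarith [one_le_natCast_sub_one hq]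
  rw [sum_rhoWeight_mul_pow_mul_pow, mul_div_cancel₀ _ ha, add_sub_cancel, one_pow, rhoArg]
  congr 3
  field_simp
  ring

lemma rhoWeight_mul_le_rhoArg {q : ℕ} (hq : 2 ≤ q) (d : ℕ) {p : ℝ} (hp0 : 0 ≤ p) (hp1 : p ≤ 1)
    {k : ℕ} (hk : k ≤ d) :
    rhoWeight (q - 1) d k * (p / (q - 1)) ^ k * (1 - p) ^ (d - k) ≤ rhoArg q d p := by
  have ha := one_le_natCast_sub_one hq
  rw [rhoArg_eq_sum hq]
  refine single_le_sum
    (f := fun j => rhoWeight (q - 1) d j * (p / (q - 1)) ^ j * (1 - p) ^ (d - j))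
    (fun j _ => ?_) (mem_range_succ_iff.mpr hk)
  have := rhoWeight_nonneg ha d j
  have : 0 ≤ 1 - p := by linarith
  positivity

lemma Dkl_zero_left (p : ℝ) : Dkl 0 p = -log (1 - p) := by simp [Dkl]

lemma Dkl_one_left (p : ℝ) : Dkl 1 p = -log p := by simp [Dkl]

lemma Dkl_self (x : ℝ) : Dkl x x = 0 := by simp [Dkl]

lemma continuous_rhoArg (q d : ℕ) : Continuous (rhoArg q d) := by
  unfold rhoArg; fun_prop

lemma rhoArg_one {q : ℕ} (hq : 2 ≤ q) (d : ℕ) :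
    rhoArg q d 1 = 1 + (q - 1) * (-(q - 1 : ℝ)⁻¹) ^ d := by
  have ha : (q : ℝ) - 1 ≠ 0 := by linarith [one_le_natCast_sub_one hq]
  rw [rhoArg]
  congr 3
  field_simp
  ring

lemma rhoArg_one_pos {q d : ℕ} (hq : 2 ≤ q) (hd : 2 ≤ d) (h : 3 ≤ q ∨ Even d) :
    0 < rhoArg q d 1 := by
  have ha := one_le_natCast_sub_one hq
  rw [rhoArg_one hq]
  rcases Nat.even_or_odd d with hev | hodd
  · have := hev.pow_nonneg (-(q - 1 : ℝ)⁻¹)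
    positivity
  · have h3 : (3 : ℝ) ≤ q := by exact_mod_cast h.resolve_right (Nat.not_even_iff_odd.mpr hodd)
    set b : ℝ := (q - 1 : ℝ)⁻¹
    have hb1 : b < 1 := inv_lt_one_of_one_lt₀ (by linarith)
    have hb0 : 0 < b := by positivity
    have hab : (q - 1 : ℝ) * b ^ d = b ^ (d - 1) := by
      rw [← mul_pow_sub_one (by omega) b, ← mul_assoc, mul_inv_cancel₀ (by linarith), one_mul]
    have : b ^ (d - 1) < 1 := pow_lt_one₀ hb0.le hb1 (by omega)
    rw [hodd.neg_pow, mul_neg, hab]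
    linarith

lemma deltaMin_zero {q : ℕ} (hq : 2 ≤ q) (d : ℕ) : deltaMin q d 0 = log q := by
  have hq0 : (0 : ℝ) < q := by linarith [one_le_natCast_sub_one hq]
  have hδ : deltaTwo q d 0 = fun p => -d * log (1 - p) + log (rhoArg q d p) := by
    ext p; rw [deltaTwo, Dkl_zero_left, rhoF_eq_log_rhoArg]; ring
  refine csInf_image_eq_of_forall_le_of_tendsto (fun p ⟨hp0, hp1⟩ => ?_)
    (Ioo_mem_nhdsGT one_pos) ?_
  · have hterm := rhoWeight_mul_le_rhoArg hq d hp0.le hp1.le (Nat.zero_le d)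
    rw [show rhoWeight (q - 1) d 0 * (p / (q - 1)) ^ 0 * (1 - p) ^ (d - 0) = q * (1 - p) ^ d by
      simp [rhoWeight]] at hterm
    have h1p : 0 < 1 - p := sub_pos.mpr hp1
    have := log_le_log (by positivity) hterm
    rw [log_mul hq0.ne' (by positivity), log_pow] at this
    rw [hδ]; linarith
  · have hc : ContinuousAt (fun p => -d * log (1 - p) + log (rhoArg q d p)) 0 :=
      ((continuous_const.sub continuous_id).continuousAt.log (by norm_num)).const_mul _ |>.add
        ((continuous_rhoArg q d).continuousAt.log (by simp [rhoArg]; omega))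
    simpa [hδ, rhoArg] using hc.tendsto.mono_left nhdsWithin_le_nhds

lemma deltaMin_one {q d : ℕ} (hq : 2 ≤ q) (hpos : 0 < rhoArg q d 1) :
    deltaMin q d 1 = rhoF q d 1 := by
  have hδ : deltaTwo q d 1 = fun p => -d * log p + log (rhoArg q d p) := by
    ext p; rw [deltaTwo, Dkl_one_left, rhoF_eq_log_rhoArg]; ring
  refine csInf_image_eq_of_forall_le_of_tendsto (fun p ⟨hp0, hp1⟩ => ?_)
    (Ioo_mem_nhdsLT one_pos) ?_
  · have hterm := rhoWeight_mul_le_rhoArg hq d hp0.le hp1.le le_rfl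
    have ha : (q : ℝ) - 1 ≠ 0 := by linarith [one_le_natCast_sub_one hq]
    rw [show rhoWeight (q - 1) d d * (p / (q - 1)) ^ d * (1 - p) ^ (d - d)
        = p ^ d * rhoArg q d 1 by
      rw [rhoArg_one hq, rhoWeight, Nat.choose_self, Nat.sub_self, neg_pow ((q : ℝ) - 1)⁻¹,
        inv_pow, div_pow]
      have := pow_ne_zero d ha
      field_simp
      ring] at hterm
    have := log_le_log (by positivity) hterm
    rw [log_mul (by positivity) hpos.ne', log_pow] at this
    rw [hδ, rhoF_eq_log_rhoArg]; linarith
  · have hc : ContinuousAt (fun p => -d * log p + log (rhoArg q d p)) 1 :=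
      (continuousAt_id.log one_ne_zero).const_mul _ |>.add
        ((continuous_rhoArg q d).continuousAt.log hpos.ne')
    simpa [hδ, rhoF_eq_log_rhoArg] using hc.tendsto.mono_left nhdsWithin_le_nhds

lemma rhoArg_one_sub_one_div {q : ℕ} (hq : 2 ≤ q) {d : ℕ} (hd : d ≠ 0) :
    rhoArg q d (1 - 1 / q) = 1 := by
  have ha : (q : ℝ) - 1 ≠ 0 := by linarith [one_le_natCast_sub_one hq]
  have hq0 : (q : ℝ) ≠ 0 := by linarith [one_le_natCast_sub_one hq]
  rw [rhoArg, show 1 - (q : ℝ) * (1 - 1 / q) / (q - 1) = 0 by field_simp; ring, zero_pow hd]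
  ring

lemma deltaTwo_one_sub_one_div_nonneg {q d : ℕ} (hq : 2 ≤ q) (hd : 2 ≤ d) {p : ℝ}
    (hp : p ∈ Set.Ioo 0 1) : 0 ≤ deltaTwo q d (1 - 1 / q) p := by
  obtain ⟨hp0, hp1⟩ := hp
  have ha := one_le_natCast_sub_one hq
  have hq0 : (0 : ℝ) < q := by linarith
  have hW : ∑ k ∈ range (d + 1), rhoWeight (q - 1) d k = (q : ℝ) ^ d := by
    rw [sum_rhoWeight (by omega), sub_add_cancel]
  have hm : ∑ k ∈ range (d + 1), k * rhoWeight (q - 1) d k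
      = d * (q - 1) / q * (q : ℝ) ^ d := by
    rw [sum_mul_rhoWeight hd, sub_add_cancel, ← mul_pow_sub_one (show d ≠ 0 by omega) (q : ℝ)]
    field_simp
  have hamgm := le_log_sum_mul_pow_mul_pow d (rhoWeight_nonneg ha d) hW (by positivity) hm
    (u := p / (q - 1)) (v := 1 - p) (by positivity) (sub_pos.mpr hp1)
  rw [← rhoArg_eq_sum hq, log_pow, log_div hp0.ne' (by positivity)] at hamgm
  have hx : (1 : ℝ) - 1 / q = (q - 1) / q := by field_simp
  have hDkl : d * Dkl (1 - 1 / q) p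
      = -(d * log q + d * (q - 1) / q * (log p - log (q - 1)) + d / q * log (1 - p)) := by
    rw [Dkl, sub_sub_cancel, hx, div_div, div_div, log_div (by positivity) (by positivity),
      log_div one_ne_zero (by positivity), log_mul hq0.ne' hp0.ne',
      log_mul hq0.ne' (by linarith), log_one]
    field_simp
    ring
  have hexp : (d : ℝ) - d * (q - 1) / q = d / q := by field_simp; ring
  rw [deltaTwo, rhoF_eq_log_rhoArg, hDkl]
  rw [hexp] at hamgm
  linarith

lemma deltaMin_one_sub_one_div {q d : ℕ} (hq : 2 ≤ q) (hd : 2 ≤ d) :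
    deltaMin q d (1 - 1 / q) = 0 := by
  have hq1 : (1 : ℝ) < q := by linarith [one_le_natCast_sub_one hq]
  have hx : 1 - 1 / (q : ℝ) ∈ Set.Ioo 0 1 :=
    ⟨by simpa using inv_lt_one_of_one_lt₀ hq1, by simp; positivity⟩
  have hself : deltaTwo q d (1 - 1 / q) (1 - 1 / q) = 0 := by
    rw [deltaTwo, rhoF_eq_log_rhoArg, Dkl_self, rhoArg_one_sub_one_div hq (by omega)]; simp
  exact IsLeast.csInf_eq ⟨⟨_, hx, hself⟩,
    forall_mem_image.2 fun p hp => hself ▸ deltaTwo_one_sub_one_div_nonneg hq hd hp⟩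

lemma rhoArg_two_of_odd {d : ℕ} (hodd : Odd d) (p : ℝ) :
    rhoArg 2 d p = 2 * (1 - p) * ∑ j ∈ range d, (2 * p - 1) ^ j := by
  have h : 1 - ((2 : ℕ) : ℝ) * p / ((2 : ℕ) - 1) = -(2 * p - 1) := by norm_num
  rw [rhoArg, h, hodd.neg_pow]
  linear_combination geom_sum_mul (2 * p - 1) d

lemma deltaTwo_two_eq_of_odd {d : ℕ} (hodd : Odd d) {x p : ℝ} (hx1 : x < 1)
    (hp : p ∈ Set.Ioo (1 / 2) 1) :
    deltaTwo 2 d x p = d * x * log (x / p) + d * (1 - x) * log (1 - x)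
      + log (2 * ∑ j ∈ range d, (2 * p - 1) ^ j) + (1 - d * (1 - x)) * log (1 - p) := by
  obtain ⟨hp0, hp1⟩ := hp
  have hS : 0 < ∑ j ∈ range d, (2 * p - 1) ^ j :=
    sum_pos (fun j _ => pow_pos (by linarith) j) (nonempty_range_iff.2 hodd.pos.ne')
  rw [deltaTwo, rhoF_eq_log_rhoArg, rhoArg_two_of_odd hodd, Dkl, mul_right_comm 2,
    log_div (sub_pos.2 hx1).ne' (sub_pos.2 hp1).ne', log_mul (by positivity) (sub_pos.2 hp1).ne']
  ring

lemma tendsto_deltaTwo_two_sub_mul_log {d : ℕ} (hodd : Odd d) {x : ℝ} (hx0 : 0 < x)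
    (hx1 : x < 1) :
    Tendsto (fun p => deltaTwo 2 d x p - (1 - d * (1 - x)) * log (1 - p)) (𝓝[<] 1)
      (𝓝 (d * x * log x + d * (1 - x) * log (1 - x) + log (2 * d))) := by
  have hc : ContinuousAt (fun p => d * x * log (x / p) + d * (1 - x) * log (1 - x)
      + log (2 * ∑ j ∈ range d, (2 * p - 1) ^ j)) 1 := by
    have hd : (d : ℝ) ≠ 0 := by exact_mod_cast hodd.pos.ne'
    refine ((continuousAt_const.div continuousAt_id one_ne_zero).log (by simpa using hx0.ne')
      |>.const_mul _ |>.add continuousAt_const).add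
      ((continuousAt_const.mul (continuous_finsetSum _ fun j _ => by fun_prop).continuousAt).log
        (by norm_num [hd]))
  have hlim := hc.tendsto.mono_left (nhdsWithin_le_nhds (s := Set.Iio 1))
  norm_num at hlim
  refine Tendsto.congr' ?_ hlim
  filter_upwards [Ioo_mem_nhdsLT (show (1 / 2 : ℝ) < 1 by norm_num)] with p hp
  rw [deltaTwo_two_eq_of_odd hodd hx1 hp]
  ring

lemma deltaMin_two_one_sub_one_div {d : ℕ} (hd : 1 < d) (hodd : Odd d) :
    deltaMin 2 d (1 - 1 / d) = log 2 + (d - 1) * log (1 - 1 / d) := by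
  have hd0 : (1 : ℝ) < d := by exact_mod_cast hd
  have hx0 : 0 < 1 - 1 / (d : ℝ) := by simpa using inv_lt_one_of_one_lt₀ hd0
  have hx1 : 1 - 1 / (d : ℝ) < 1 := by simp; positivity
  refine csInf_image_eq_of_forall_le_of_tendsto (fun p ⟨hp0, hp1⟩ => ?_)
    (Ioo_mem_nhdsLT one_pos) ?_
  · have hterm := rhoWeight_mul_le_rhoArg le_rfl d hp0.le hp1.le (Nat.sub_le d 1)
    have heven : Even (d - 1) := Nat.Odd.sub_odd hodd odd_one
    have h21 : ((2 : ℕ) : ℝ) - 1 = 1 := by norm_num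
    rw [show rhoWeight ((2 : ℕ) - 1) d (d - 1) * (p / ((2 : ℕ) - 1)) ^ (d - 1)
        * (1 - p) ^ (d - (d - 1)) = 2 * d * p ^ (d - 1) * (1 - p) by
      rw [h21, div_one, rhoWeight, Nat.choose_symm (by omega), Nat.choose_one_right,
        heven.neg_one_pow, Nat.sub_sub_self (by omega)]
      ring] at hterm
    have h1p : 0 < 1 - p := sub_pos.2 hp1
    have hlog := log_le_log (by positivity) hterm
    rw [log_mul (by positivity) h1p.ne', log_mul (by positivity) (by positivity),
      log_mul two_ne_zero (by positivity), log_pow, Nat.cast_sub hd.le, Nat.cast_one] at hlog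
    have hDkl : d * Dkl (1 - 1 / d) p
        = (d - 1) * (log (1 - 1 / d) - log p) - log d - log (1 - p) := by
      rw [Dkl, sub_sub_cancel, log_div hx0.ne' hp0.ne', div_div,
        log_div one_ne_zero (by positivity), log_mul (by positivity) h1p.ne', log_one]
      field_simp
      ring
    rw [deltaTwo, rhoF_eq_log_rhoArg, hDkl]
    linarith
  · have hlim := tendsto_deltaTwo_two_sub_mul_log hodd hx0 hx1
    have hκ : (1 : ℝ) - d * (1 - (1 - 1 / d)) = 0 := by field_simp; ring
    have hL : d * (1 - 1 / d) * log (1 - 1 / d) + d * (1 - (1 - 1 / d)) * log (1 - (1 - 1 / d))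
        + log (2 * d) = log 2 + (d - 1) * log (1 - 1 / (d : ℝ)) := by
      rw [sub_sub_cancel, log_mul two_ne_zero (by positivity), one_div, log_inv]
      field_simp
      ring
    rw [hκ, hL] at hlim
    simpa only [zero_mul, sub_zero] using hlim

lemma tendsto_log_one_sub_nhdsLT_one : Tendsto (fun p : ℝ => log (1 - p)) (𝓝[<] 1) atBot := by
  refine tendsto_log_nhdsGT_zero.comp (tendsto_nhdsWithin_iff.2
    ⟨?_, eventually_nhdsWithin_of_forall fun p hp => Set.mem_Ioi.2 (sub_pos.2 hp)⟩)
  exact ((continuous_sub_left 1).tendsto' 1 0 (sub_self 1)).mono_left nhdsWithin_le_nhds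

lemma tendsto_deltaTwo_two_atBot {d : ℕ} (hodd : Odd d) {x : ℝ}
    (hx : x ∈ Set.Ioo (1 - 1 / (d : ℝ)) 1) : Tendsto (deltaTwo 2 d x) (𝓝[<] 1) atBot := by
  obtain ⟨hxl, hx1⟩ := hx
  have hd : (1 : ℝ) ≤ d := by exact_mod_cast hodd.pos
  have hx0 : 0 < x := lt_of_le_of_lt (by simpa using inv_le_one_of_one_le₀ hd) hxl
  have hκ : 0 < 1 - d * (1 - x) := by
    have : (d : ℝ) * (1 - x) < d * (1 / d) := by gcongr; linarith
    rw [mul_one_div_cancel (by positivity)] at this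
    linarith
  simpa using (tendsto_deltaTwo_two_sub_mul_log hodd hx0 hx1).add_atBot
    (tendsto_log_one_sub_nhdsLT_one.const_mul_atBot hκ)

lemma Hent_zero (q : ℕ) : Hent q 0 = 0 := by simp [Hent]

lemma Hent_one (q : ℕ) : Hent q 1 = log (q - 1) := by simp [Hent]

lemma Hent_one_sub_one_div {q : ℕ} (hq : 2 ≤ q) : Hent q (1 - 1 / q) = log q := by
  have ha : (0 : ℝ) < q - 1 := by linarith [one_le_natCast_sub_one hq]
  have hq0 : (0 : ℝ) < q := by linarith
  rw [Hent, sub_sub_cancel, one_div_one_div, show (1 : ℝ) - 1 / q = (q - 1) / q by field_simp,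
    one_div_div, log_div hq0.ne' ha.ne']
  field_simp
  ring

/-- Values of `ω_{q,c,d}` at special points: `ω(0) = 0`,
`ω(1−1/q) = (1−c/d)·ln q`; if `q ≥ 3` or `d` is even then
`ω(1) = ln(q−1) + (c/d)ρ_{q,d}(1) − (c/d)ln q`; if `q = 2` and `d` is odd then
`ω(1−1/d) = (1−c)H₂(1/d) + (c/d)ln d` and `ω(x) = −∞` on `(1−1/d, 1)` (i.e. the defining
infimum is unbounded below there). -/
theorem omegaF_special_values (q c d : ℕ) (hq : 2 ≤ q) (hc : 1 ≤ c) (hd : 3 ≤ d) :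
    omegaF q c d 0 = 0 ∧
    omegaF q c d (1 - 1 / (q : ℝ)) = (1 - (c : ℝ) / (d : ℝ)) * Real.log (q : ℝ) ∧
    (3 ≤ q ∨ Even d →
      omegaF q c d 1 =
        Real.log ((q : ℝ) - 1) + ((c : ℝ) / (d : ℝ)) * rhoF q d 1 -
          ((c : ℝ) / (d : ℝ)) * Real.log (q : ℝ)) ∧
    (q = 2 ∧ Odd d →
      omegaF q c d (1 - 1 / (d : ℝ)) =
        (1 - (c : ℝ)) * Hent 2 (1 / (d : ℝ)) + ((c : ℝ) / (d : ℝ)) * Real.log (d : ℝ) ∧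
      (∀ x ∈ Set.Ioo (1 - 1 / (d : ℝ)) 1, ∀ M : ℝ, ∃ xh ∈ Set.Ioo (0 : ℝ) 1,
        Hent q x + ((c : ℝ) / (d : ℝ)) * (deltaTwo q d x xh - Real.log (q : ℝ)) < M)) := by
  refine ⟨?_, ?_, fun h => ?_, ?_⟩
  · rw [omegaF, deltaMin_zero hq, Hent_zero]; ring
  · rw [omegaF, deltaMin_one_sub_one_div hq (by omega), Hent_one_sub_one_div hq]; ring
  · rw [omegaF, deltaMin_one hq (rhoArg_one_pos hq (by omega) h), Hent_one]; ring
  rintro ⟨rfl, hodd⟩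
  refine ⟨?_, fun x hx M => ?_⟩
  · rw [omegaF, deltaMin_two_one_sub_one_div (by omega) hodd]
    norm_num [Hent, log_inv]
    field_simp
    ring
  · have hcd : 0 < (c : ℝ) / d := by positivity
    have hω := tendsto_atBot_add_const_left _ (Hent 2 x)
      ((tendsto_atBot_add_const_right _ (-log ((2 : ℕ) : ℝ))
        (tendsto_deltaTwo_two_atBot hodd hx)).const_mul_atBot hcd)
    obtain ⟨p, hp, hlt⟩ :=
      (Eventually.and (Ioo_mem_nhdsLT one_pos) (hω.eventually (eventually_lt_atBot M))).exists
    exact ⟨p, hp, by simpa [sub_eq_add_neg] using hlt⟩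
end
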